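/- Let L > 0 and e > 0. Define E_min(e) := ∫_{-1}^{1} √((1/2)(s²-1)² + e) ds − L·e. Then for u continuously differentiable on [-L,L] with u(±L) = ±1, monotone increasing with range exactly [-1,1], and satisfying u'(ξ) = √((1/2)(u(ξ)²-1)² + e) for all ξ, the energy E_L(u) = ∫_{-L}^{L}[ (u')²/2 + (1/4)(u²-1)² ] dξ equals E_min(e). -/
import Mathlib


/-- The minimal profile attains the minimal energy `∫_{-1}^{1} V − L e`. -/
theorem stmt19 (L e : ℝ) (hL : 0 < L) (he : 0 < e) (u u' : ℝ → ℝ)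
    (hderiv : ∀ ξ ∈ Set.Icc (-L) L, HasDerivAt u (u' ξ) ξ)
    (hcont : ContinuousOn u' (Set.Icc (-L) L))
    (hbl : u (-L) = -1) (hbr : u L = 1)
    (hmono : MonotoneOn u (Set.Icc (-L) L))
    (hrange : u '' Set.Icc (-L) L = Set.Icc (-1 : ℝ) 1)
    (hode : ∀ ξ ∈ Set.Icc (-L) L, u' ξ = Real.sqrt ((1 / 2) * ((u ξ) ^ 2 - 1) ^ 2 + e)) :
    (∫ ξ in (-L)..L, ((u' ξ) ^ 2 / 2 + (1 / 4) * ((u ξ) ^ 2 - 1) ^ 2))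
      = (∫ s in (-1 : ℝ)..1, Real.sqrt ((1 / 2) * (s ^ 2 - 1) ^ 2 + e)) - L * e := by
  have hLL : (-L) ≤ L := by linarith
  have huIcc : Set.uIcc (-L) L = Set.Icc (-L) L := Set.uIcc_of_le hLL
  set V : ℝ → ℝ := fun s => Real.sqrt ((1 / 2) * (s ^ 2 - 1) ^ 2 + e) with hV
  have hVcont : Continuous V := by
    apply Real.continuous_sqrt.comp
    continuity
  have hucont : ContinuousOn u (Set.Icc (-L) L) := fun ξ hξ =>
    (hderiv ξ hξ).continuousAt.continuousWithinAt
  -- pointwise identity on the interval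
  have hpt : ∀ ξ ∈ Set.Icc (-L) L,
      (u' ξ) ^ 2 / 2 + (1 / 4) * ((u ξ) ^ 2 - 1) ^ 2 = u' ξ * V (u ξ) - e / 2 := by
    intro ξ hξ
    have h1 := hode ξ hξ
    have harg : (0:ℝ) ≤ (1 / 2) * ((u ξ) ^ 2 - 1) ^ 2 + e := by positivity
    have h2 : (V (u ξ)) ^ 2 = (1 / 2) * ((u ξ) ^ 2 - 1) ^ 2 + e := Real.sq_sqrt harg
    rw [h1]
    show (V (u ξ)) ^ 2 / 2 + (1 / 4) * ((u ξ) ^ 2 - 1) ^ 2 = V (u ξ) * V (u ξ) - e / 2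
    nlinarith [h2]
  have hcongr : (∫ ξ in (-L)..L, ((u' ξ) ^ 2 / 2 + (1 / 4) * ((u ξ) ^ 2 - 1) ^ 2))
      = ∫ ξ in (-L)..L, (u' ξ * V (u ξ) - e / 2) := by
    apply intervalIntegral.integral_congr
    intro ξ hξ
    exact hpt ξ (huIcc ▸ hξ)
  have hint1 : IntervalIntegrable (fun ξ => u' ξ * V (u ξ)) MeasureTheory.volume (-L) L := by
    apply ContinuousOn.intervalIntegrable
    rw [huIcc]
    exact hcont.mul (hVcont.comp_continuousOn hucont)
  have hint2 : IntervalIntegrable (fun _ : ℝ => e / 2) MeasureTheory.volume (-L) L :=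
    intervalIntegrable_const
  have hcov : (∫ ξ in (-L)..L, u' ξ * V (u ξ)) = ∫ s in (-1:ℝ)..1, V s := by
    have := intervalIntegral.integral_comp_smul_deriv
      (f := u) (f' := u') (g := V)
      (fun x hx => hderiv x (huIcc ▸ hx)) (huIcc ▸ hcont) hVcont
    simpa [hbl, hbr, smul_eq_mul] using this
  rw [hcongr, intervalIntegral.integral_sub hint1 hint2, hcov,
    intervalIntegral.integral_const]
  rw [smul_eq_mul]
  ring
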